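/- Let U ⊆ ℝⁿ be open, V : U → ℝⁿ, β, m, r, ℓ ∈ ℝ, and set s = (m−1)/2 + βr (the threshold regularity). Let ρ, τ : U → (0,∞), β₀ : U → ℝ, and ρ₀, 𝗉 : U → ℝ be differentiable, with Dρ(x)[V(x)] = β₀(x)ρ(x), Dτ(x)[V(x)] = −β₀(x)βτ(x), and ρ(x)^{-β}τ(x)^{-2} > 1 for all x ∈ U. Let φ₀, φ₁, φ : ℝ → ℝ be continuously differentiable, and define L(x) = log(ρ(x)^{-β}τ(x)^{-2}) and the commutant ǎ(x) = ρ(x)^{-s+(m−1)/2} τ(x)^{-r} L(x)^{ℓ+1/2} φ₀(ρ₀(x)) φ₁(τ(x)) φ(𝗉(x)). Then for every x ∈ U: ǎ(x)·Dǎ(x)[ρ(x)^{-(m−1)}V(x)] = ρ(x)^{-2s} τ(x)^{-2r} L(x)^{2ℓ} φ₀φ₁φ · [ (ℓ+1/2)β₀(x)β·φ₀φ₁φ + L(x)·( (Dρ₀(x)[V(x)])·φ₀'·φ₁·φ − β₀(x)β·τ(x)·φ₁'·φ₀·φ + (D𝗉(x)[V(x)])·φ'·φ₀·φ₁ ) ],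 where φ₀, φ₀' are evaluated at ρ₀(x), φ₁, φ₁' at τ(x), and φ, φ' at 𝗉(x). (This is the exact positive-commutator symbol identity ǎ H_p ǎ of the logarithmically improved radial point estimate at the threshold regularity, with V playing the role of the rescaled Hamilton vector field 𝖧_p = ρ̂^{m−1}H_p and ρ^{-(m−1)}V that of H_p.) -/

import Mathlib

/-!
Along `V` the logarithmic derivatives of `ρ` and `τ` are `β₀` and `-β₀β`. Hence
`L = -β log ρ - 2 log τ` grows at the rate `V L = β₀β`, while at the threshold `s` the weight
`ρ^{-s+(m-1)/2} τ^{-r} = ρ^{-βr} τ^{-r}` is annihilated by `V`. The product rule for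
`ǎ = w · L^{ℓ+1/2} · φ₀φ₁φ` thus leaves only the term `(ℓ+1/2) L^{ℓ-1/2} β₀β`, coming from the
logarithm, and the derivatives of the cutoffs; the factor `ρ^{-(m-1)}` turns `w²` into
`ρ^{-2s} τ^{-2r}`.
-/

open Real

section LogarithmicDerivative

variable {E : Type*} [NormedAddCommGroup E] [NormedSpace ℝ E] {f g : E → ℝ} {x v : E}

theorem fderiv_fun_mul_apply (hf : DifferentiableAt ℝ f x) (hg : DifferentiableAt ℝ g x) :
    fderiv ℝ (fun y => f y * g y) x v = f x * fderiv ℝ g x v + g x * fderiv ℝ f x v := by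
  simp [fderiv_fun_mul hf hg]

theorem fderiv_comp_apply_of_differentiableAt {φ : ℝ → ℝ} (hφ : DifferentiableAt ℝ φ (f x))
    (hf : DifferentiableAt ℝ f x) :
    fderiv ℝ (fun y => φ (f y)) x v = deriv φ (f x) * fderiv ℝ f x v := by
  change fderiv ℝ (φ ∘ f) x v = _
  rw [(hφ.hasDerivAt.comp_hasFDerivAt x hf.hasFDerivAt).fderiv]
  rfl

theorem fderiv_rpow_const_apply (hf : DifferentiableAt ℝ f x) (hfx : 0 < f x) (a : ℝ) :
    fderiv ℝ (fun y => f y ^ a) x v = a * (fderiv ℝ f x v / f x) * f x ^ a := by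
  rw [(hf.hasFDerivAt.rpow_const (Or.inl hfx.ne')).fderiv, rpow_sub_one hfx.ne']
  simp only [smul_apply, smul_eq_mul]
  ring

theorem fderiv_rpow_mul_rpow_apply (hf : DifferentiableAt ℝ f x) (hg : DifferentiableAt ℝ g x)
    (hfx : 0 < f x) (hgx : 0 < g x) (a b : ℝ) :
    fderiv ℝ (fun y => f y ^ a * g y ^ b) x v
      = (a * (fderiv ℝ f x v / f x) + b * (fderiv ℝ g x v / g x)) * (f x ^ a * g x ^ b) := by
  rw [fderiv_fun_mul_apply (hf.rpow_const (Or.inl hfx.ne')) (hg.rpow_const (Or.inl hgx.ne')),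
    fderiv_rpow_const_apply hf hfx, fderiv_rpow_const_apply hg hgx]
  ring

theorem fderiv_log_rpow_mul_rpow_apply (hf : DifferentiableAt ℝ f x) (hg : DifferentiableAt ℝ g x)
    (hfx : 0 < f x) (hgx : 0 < g x) (a b : ℝ) :
    fderiv ℝ (fun y => log (f y ^ a * g y ^ b)) x v
      = a * (fderiv ℝ f x v / f x) + b * (fderiv ℝ g x v / g x) := by
  have hpos : 0 < f x ^ a * g x ^ b := by positivity
  rw [fderiv.log ((hf.rpow_const (Or.inl hfx.ne')).fun_mul (hg.rpow_const (Or.inl hgx.ne')))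
      hpos.ne',
    smul_apply, fderiv_rpow_mul_rpow_apply hf hg hfx hgx, smul_eq_mul]
  field_simp

end LogarithmicDerivative

section Commutant

variable {E : Type*} [NormedAddCommGroup E] [NormedSpace ℝ E] {w L Φ : E → ℝ} {x v : E}

theorem mul_fderiv_apply_of_fderiv_weight_eq_zero (hw : DifferentiableAt ℝ w x)
    (hwv : fderiv ℝ w x v = 0) (hL : DifferentiableAt ℝ L x) (hLx : 0 < L x)
    (hΦ : DifferentiableAt ℝ Φ x) (k : ℝ) :
    w x * L x ^ k * Φ x * fderiv ℝ (fun y => w y * L y ^ k * Φ y) x v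
      = w x ^ 2 * L x ^ (2 * k - 1) * Φ x * (k * fderiv ℝ L x v * Φ x + L x * fderiv ℝ Φ x v) := by
  have hLk : DifferentiableAt ℝ (fun y => L y ^ k) x := hL.rpow_const (Or.inl hLx.ne')
  rw [fderiv_fun_mul_apply (hw.fun_mul hLk) hΦ, fderiv_fun_mul_apply hw hLk, hwv,
    fderiv_rpow_const_apply hL hLx, show 2 * k - 1 = k + k - 1 by ring, rpow_sub_one hLx.ne',
    rpow_add hLx]
  field_simp
  ring

theorem fderiv_comp_mul_comp_mul_comp_apply {f₁ f₂ f₃ : E → ℝ} {φ₁ φ₂ φ₃ : ℝ → ℝ}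
    (hφ₁ : DifferentiableAt ℝ φ₁ (f₁ x)) (hφ₂ : DifferentiableAt ℝ φ₂ (f₂ x))
    (hφ₃ : DifferentiableAt ℝ φ₃ (f₃ x)) (hf₁ : DifferentiableAt ℝ f₁ x)
    (hf₂ : DifferentiableAt ℝ f₂ x) (hf₃ : DifferentiableAt ℝ f₃ x) :
    fderiv ℝ (fun y => φ₁ (f₁ y) * φ₂ (f₂ y) * φ₃ (f₃ y)) x v
      = fderiv ℝ f₁ x v * deriv φ₁ (f₁ x) * φ₂ (f₂ x) * φ₃ (f₃ x)
        + fderiv ℝ f₂ x v * deriv φ₂ (f₂ x) * φ₁ (f₁ x) * φ₃ (f₃ x)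
        + fderiv ℝ f₃ x v * deriv φ₃ (f₃ x) * φ₁ (f₁ x) * φ₂ (f₂ x) := by
  have h₁ : DifferentiableAt ℝ (fun y => φ₁ (f₁ y)) x := hφ₁.comp x hf₁
  have h₂ : DifferentiableAt ℝ (fun y => φ₂ (f₂ y)) x := hφ₂.comp x hf₂
  have h₃ : DifferentiableAt ℝ (fun y => φ₃ (f₃ y)) x := hφ₃.comp x hf₃
  rw [fderiv_fun_mul_apply (h₁.fun_mul h₂) h₃, fderiv_fun_mul_apply h₁ h₂,
    fderiv_comp_apply_of_differentiableAt hφ₁ hf₁, fderiv_comp_apply_of_differentiableAt hφ₂ hf₂,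
    fderiv_comp_apply_of_differentiableAt hφ₃ hf₃]
  ring

end Commutant

section Threshold

variable {E : Type*} [NormedAddCommGroup E] [NormedSpace ℝ E] {ρ τ : E → ℝ} {x v : E} {b β : ℝ}

theorem fderiv_rpow_mul_rpow_apply_eq_zero (hρ : DifferentiableAt ℝ ρ x)
    (hτ : DifferentiableAt ℝ τ x) (hρx : 0 < ρ x) (hτx : 0 < τ x)
    (hρv : fderiv ℝ ρ x v = b * ρ x) (hτv : fderiv ℝ τ x v = -(b * β * τ x)) (c : ℝ) :
    fderiv ℝ (fun y => ρ y ^ (β * c) * τ y ^ c) x v = 0 := by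
  rw [fderiv_rpow_mul_rpow_apply hρ hτ hρx hτx, hρv, hτv]
  field_simp
  ring

theorem fderiv_log_rpow_mul_rpow_apply_eq (hρ : DifferentiableAt ℝ ρ x)
    (hτ : DifferentiableAt ℝ τ x) (hρx : 0 < ρ x) (hτx : 0 < τ x)
    (hρv : fderiv ℝ ρ x v = b * ρ x) (hτv : fderiv ℝ τ x v = -(b * β * τ x)) :
    fderiv ℝ (fun y => log (ρ y ^ (-β) * τ y ^ (-2 : ℝ))) x v = b * β := by
  rw [fderiv_log_rpow_mul_rpow_apply hρ hτ hρx hτx, hρv, hτv]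
  field_simp
  ring

end Threshold

theorem radial_commutant_identity_general (n : ℕ)
    (U : Set (EuclideanSpace ℝ (Fin n)))
    (V : EuclideanSpace ℝ (Fin n) → EuclideanSpace ℝ (Fin n))
    (β m r ℓ s : ℝ) (hs : s = (m - 1)/2 + β * r)
    (ρ τ β₀ ρ₀ p : EuclideanSpace ℝ (Fin n) → ℝ)
    (hρpos : ∀ x ∈ U, 0 < ρ x) (hτpos : ∀ x ∈ U, 0 < τ x)
    (hρdiff : ∀ x ∈ U, DifferentiableAt ℝ ρ x)
    (hτdiff : ∀ x ∈ U, DifferentiableAt ℝ τ x)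
    (hρ₀diff : ∀ x ∈ U, DifferentiableAt ℝ ρ₀ x)
    (hpdiff : ∀ x ∈ U, DifferentiableAt ℝ p x)
    (hρder : ∀ x ∈ U, fderiv ℝ ρ x (V x) = β₀ x * ρ x)
    (hτder : ∀ x ∈ U, fderiv ℝ τ x (V x) = -(β₀ x * β * τ x))
    (hL1 : ∀ x ∈ U, 1 < ρ x ^ (-β) * τ x ^ (-2 : ℝ))
    (φ₀ φ₁ φ : ℝ → ℝ)
    (hφ₀ : ContDiff ℝ 1 φ₀) (hφ₁ : ContDiff ℝ 1 φ₁) (hφ : ContDiff ℝ 1 φ)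
    (L ca : EuclideanSpace ℝ (Fin n) → ℝ)
    (hL : L = fun x => Real.log (ρ x ^ (-β) * τ x ^ (-2 : ℝ)))
    (hca : ca = fun x => ρ x ^ (-s + (m - 1)/2) * τ x ^ (-r) * L x ^ (ℓ + 1/2) *
      φ₀ (ρ₀ x) * φ₁ (τ x) * φ (p x)) :
    ∀ x ∈ U,
      ca x * fderiv ℝ ca x ((ρ x ^ (-(m - 1))) • V x)
        = ρ x ^ (-(2 * s)) * τ x ^ (-(2 * r)) * L x ^ (2 * ℓ) *
            (φ₀ (ρ₀ x) * φ₁ (τ x) * φ (p x)) *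
            ((ℓ + 1/2) * β₀ x * β * (φ₀ (ρ₀ x) * φ₁ (τ x) * φ (p x))
              + L x * (fderiv ℝ ρ₀ x (V x) * deriv φ₀ (ρ₀ x) * φ₁ (τ x) * φ (p x)
                  - β₀ x * β * τ x * deriv φ₁ (τ x) * φ₀ (ρ₀ x) * φ (p x)
                  + fderiv ℝ p x (V x) * deriv φ (p x) * φ₀ (ρ₀ x) * φ₁ (τ x))) := by
  intro x hx
  subst hs
  have hρx := hρpos x hx
  have hτx := hτpos x hx
  have hρ := hρdiff x hx
  have hτ := hτdiff x hx
  have hLx : 0 < L x := hL ▸ log_pos (hL1 x hx)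
  have hLdiff : DifferentiableAt ℝ L x := hL ▸ (((hρ.rpow_const (Or.inl hρx.ne')).mul
    (hτ.rpow_const (Or.inl hτx.ne'))).log (zero_lt_one.trans (hL1 x hx)).ne')
  have hLV : fderiv ℝ L x (V x) = β₀ x * β :=
    hL ▸ fderiv_log_rpow_mul_rpow_apply_eq hρ hτ hρx hτx (hρder x hx) (hτder x hx)
  have hweight : ρ x ^ (-(2 * ((m - 1) / 2 + β * r))) * τ x ^ (-(2 * r))
      = ρ x ^ (-(m - 1)) * (ρ x ^ (β * -r) * τ x ^ (-r)) ^ 2 := by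
    rw [mul_pow, ← rpow_mul_natCast hρx.le, ← rpow_mul_natCast hτx.le, ← mul_assoc,
      ← rpow_add hρx]
    ring_nf
  have hca_split : ca = fun y => ρ y ^ (β * -r) * τ y ^ (-r) * L y ^ (ℓ + 1/2) *
      (φ₀ (ρ₀ y) * φ₁ (τ y) * φ (p y)) := by
    rw [hca, show -((m - 1) / 2 + β * r) + (m - 1) / 2 = β * -r by ring]
    simp only [mul_assoc]
  have hφ₀x := hφ₀.differentiable one_ne_zero (ρ₀ x)
  have hφ₁x := hφ₁.differentiable one_ne_zero (τ x)
  have hφx := hφ.differentiable one_ne_zero (p x)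
  have hΦ : DifferentiableAt ℝ (fun y => φ₀ (ρ₀ y) * φ₁ (τ y) * φ (p y)) x :=
    ((hφ₀x.comp x (hρ₀diff x hx)).fun_mul (hφ₁x.comp x hτ)).fun_mul (hφx.comp x (hpdiff x hx))
  rw [hca_split, map_smul, smul_eq_mul]
  beta_reduce
  rw [mul_left_comm _ (ρ x ^ _), mul_fderiv_apply_of_fderiv_weight_eq_zero
      ((hρ.rpow_const (Or.inl hρx.ne')).fun_mul (hτ.rpow_const (Or.inl hτx.ne')))
      (fderiv_rpow_mul_rpow_apply_eq_zero hρ hτ hρx hτx (hρder x hx) (hτder x hx) (-r))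
      hLdiff hLx hΦ, hLV, hweight, show 2 * (ℓ + 1 / 2) - 1 = 2 * ℓ by ring,
    fderiv_comp_mul_comp_mul_comp_apply hφ₀x hφ₁x hφx (hρ₀diff x hx) hτ (hpdiff x hx), hτder x hx]
  ring

/-- The exact positive-commutator symbol identity `ǎ H_p ǎ` for the logarithmically improved
radial point estimate at the threshold regularity `s = (m−1)/2 + βr`: with
`L = log(ρ^{-β}τ^{-2})` and the commutant
`ǎ = ρ^{-s+(m−1)/2} τ^{-r} L^{ℓ+1/2} φ₀(ρ₀) φ₁(τ) φ(p)`, for every `x ∈ U` one has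
`ǎ·Dǎ[ρ^{-(m−1)}V] = ρ^{-2s} τ^{-2r} L^{2ℓ} φ₀φ₁φ ·
  ( (ℓ+1/2)β₀β φ₀φ₁φ + L·( (Dρ₀[V])φ₀'φ₁φ − β₀βτ φ₁'φ₀φ + (Dp[V])φ'φ₀φ₁ ) )`. -/
theorem radial_commutant_identity (n : ℕ)
    (U : Set (EuclideanSpace ℝ (Fin n))) (hU : IsOpen U)
    (V : EuclideanSpace ℝ (Fin n) → EuclideanSpace ℝ (Fin n))
    (β m r ℓ s : ℝ) (hs : s = (m - 1)/2 + β * r)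
    (ρ τ β₀ ρ₀ p : EuclideanSpace ℝ (Fin n) → ℝ)
    (hρpos : ∀ x ∈ U, 0 < ρ x) (hτpos : ∀ x ∈ U, 0 < τ x)
    (hρdiff : ∀ x ∈ U, DifferentiableAt ℝ ρ x)
    (hτdiff : ∀ x ∈ U, DifferentiableAt ℝ τ x)
    (hρ₀diff : ∀ x ∈ U, DifferentiableAt ℝ ρ₀ x)
    (hpdiff : ∀ x ∈ U, DifferentiableAt ℝ p x)
    (hρder : ∀ x ∈ U, fderiv ℝ ρ x (V x) = β₀ x * ρ x)
    (hτder : ∀ x ∈ U, fderiv ℝ τ x (V x) = -(β₀ x * β * τ x))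
    (hL1 : ∀ x ∈ U, 1 < ρ x ^ (-β) * τ x ^ (-2 : ℝ))
    (φ₀ φ₁ φ : ℝ → ℝ)
    (hφ₀ : ContDiff ℝ 1 φ₀) (hφ₁ : ContDiff ℝ 1 φ₁) (hφ : ContDiff ℝ 1 φ)
    (L ca : EuclideanSpace ℝ (Fin n) → ℝ)
    (hL : L = fun x => Real.log (ρ x ^ (-β) * τ x ^ (-2 : ℝ)))
    (hca : ca = fun x => ρ x ^ (-s + (m - 1)/2) * τ x ^ (-r) * L x ^ (ℓ + 1/2) *
      φ₀ (ρ₀ x) * φ₁ (τ x) * φ (p x)) :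
    ∀ x ∈ U,
      ca x * fderiv ℝ ca x ((ρ x ^ (-(m - 1))) • V x)
        = ρ x ^ (-(2 * s)) * τ x ^ (-(2 * r)) * L x ^ (2 * ℓ) *
            (φ₀ (ρ₀ x) * φ₁ (τ x) * φ (p x)) *
            ((ℓ + 1/2) * β₀ x * β * (φ₀ (ρ₀ x) * φ₁ (τ x) * φ (p x))
              + L x * (fderiv ℝ ρ₀ x (V x) * deriv φ₀ (ρ₀ x) * φ₁ (τ x) * φ (p x)
                  - β₀ x * β * τ x * deriv φ₁ (τ x) * φ₀ (ρ₀ x) * φ (p x)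
                  + fderiv ℝ p x (V x) * deriv φ (p x) * φ₀ (ρ₀ x) * φ₁ (τ x))) :=
  radial_commutant_identity_general n U V β m r ℓ s hs ρ τ β₀ ρ₀ p hρpos hτpos hρdiff hτdiff hρ₀diff
    hpdiff hρder hτder hL1 φ₀ φ₁ φ hφ₀ hφ₁ hφ L ca hL hca
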